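/- arXiv:2202.05295 — 3 statements merged into one kernel-verified Lean document; each statement's English description precedes it below -/
import Mathlib

section
/- Let g(x) = Mx + b be affine on R^n with ‖M‖₂ = κ < 1, and let f(x) = x − g(x). Given iterates x_{k−m},...,x_k, let α minimize ‖Σ α_i f(x_{k−m+i})‖₂ subject to Σ α_i = 1, and let β ∈ (0,1]. Then the Anderson update x_{k+1} = (1−β) Σ α_i x_{k−m+i} + β Σ α_i g(x_{k−m+i}) satisfies ‖f(x_{k+1})‖₂ ≤ ((1−β) + κβ) ‖Σ α_i f(x_{k−m+i})‖₂ ≤ ((1−β) + κβ) ‖f(x_k)‖₂. -/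
open Finset

/-! Averaging commutes with the affine map `g`, so the optimized combined residual is the residual
`r = y - g y` of the averaged iterate `y`, and the damped step moves to `y - β r`, whose residual is
`(1 - β) r + β M r`; its norm is at most `(1 - β + κβ) ‖r‖`. Taking the weights `(0, …, 0, 1)` in the
minimization bounds `‖r‖` by the last residual. -/

section Affine

variable {R E ι : Type*} [Ring R] [AddCommGroup E] [Module R E]
  {M : E →ₗ[R] E} {b : E} {g : E → E}

theorem sum_smul_apply_of_affine (hg : ∀ x, g x = M x + b) {s : Finset ι} {α : ι → R}
    (hα : ∑ i ∈ s, α i = 1) (x : ι → E) :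
    ∑ i ∈ s, α i • g (x i) = g (∑ i ∈ s, α i • x i) := by
  simp only [hg, smul_add, sum_add_distrib, ← sum_smul, hα, one_smul, map_sum, map_smul]

theorem sum_smul_residual_of_affine (hg : ∀ x, g x = M x + b) {s : Finset ι} {α : ι → R}
    (hα : ∑ i ∈ s, α i = 1) (x : ι → E) :
    ∑ i ∈ s, α i • (x i - g (x i)) = ∑ i ∈ s, α i • x i - g (∑ i ∈ s, α i • x i) := by
  rw [← sum_smul_apply_of_affine hg hα, ← sum_sub_distrib]
  simp only [smul_sub]

end Affine

theorem residual_damped_step_of_affine {R E : Type*} [CommRing R] [AddCommGroup E] [Module R E]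
    {M : E →ₗ[R] E} {b : E} {g : E → E} (hg : ∀ x, g x = M x + b) (β : R) (y : E) :
    ((1 - β) • y + β • g y) - g ((1 - β) • y + β • g y) = (1 - β) • (y - g y) + β • M (y - g y) := by
  simp only [hg, map_add, map_sub, map_smul]
  module

theorem norm_damped_add_le {E : Type*} [SeminormedAddCommGroup E] [NormedSpace ℝ E]
    {A : E →L[ℝ] E} {κ β : ℝ} (hA : ‖A‖ ≤ κ) (hβ0 : 0 ≤ β) (hβ1 : β ≤ 1) (r : E) :
    ‖(1 - β) • r + β • A r‖ ≤ ((1 - β) + κ * β) * ‖r‖ :=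
  calc ‖(1 - β) • r + β • A r‖ ≤ ‖(1 - β) • r‖ + ‖β • A r‖ := norm_add_le _ _
    _ = (1 - β) * ‖r‖ + β * ‖A r‖ := by
        rw [norm_smul, norm_smul, Real.norm_of_nonneg (sub_nonneg.2 hβ1), Real.norm_of_nonneg hβ0]
    _ ≤ (1 - β) * ‖r‖ + β * (κ * ‖r‖) := by
        gcongr
        exact A.le_of_opNorm_le hA r
    _ = ((1 - β) + κ * β) * ‖r‖ := by ring

theorem norm_sum_smul_le_of_isMinOn_affine {E ι : Type*} [SeminormedAddCommGroup E]
    [Module ℝ E] [Fintype ι] [DecidableEq ι] {v : ι → E} {α : ι → ℝ}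
    (hopt : ∀ α' : ι → ℝ, ∑ i, α' i = 1 → ‖∑ i, α i • v i‖ ≤ ‖∑ i, α' i • v i‖) (j : ι) :
    ‖∑ i, α i • v i‖ ≤ ‖v j‖ := by
  simpa [Pi.single_apply, ite_smul] using hopt (Pi.single j 1) (by simp)

theorem stmt_7_general (n m : ℕ) (κ : ℝ)
    (M : EuclideanSpace ℝ (Fin n) →L[ℝ] EuclideanSpace ℝ (Fin n))
    (hM : ‖M‖ = κ)
    (b : EuclideanSpace ℝ (Fin n))
    (g : EuclideanSpace ℝ (Fin n) → EuclideanSpace ℝ (Fin n))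
    (hg : ∀ x, g x = M x + b)
    (x : Fin (m + 1) → EuclideanSpace ℝ (Fin n))
    (α : Fin (m + 1) → ℝ) (hα : (∑ i, α i) = 1)
    (hopt : ∀ α' : Fin (m + 1) → ℝ, (∑ i, α' i) = 1 →
      ‖∑ i, α i • (x i - g (x i))‖ ≤ ‖∑ i, α' i • (x i - g (x i))‖)
    (β : ℝ) (hβ0 : 0 < β) (hβ1 : β ≤ 1)
    (xnew : EuclideanSpace ℝ (Fin n))
    (hnew : xnew = (1 - β) • (∑ i, α i • x i) + β • (∑ i, α i • g (x i))) :
    ‖xnew - g xnew‖ ≤ ((1 - β) + κ * β) * ‖∑ i, α i • (x i - g (x i))‖ ∧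
    ‖∑ i, α i • (x i - g (x i))‖ ≤ ‖x (Fin.last m) - g (x (Fin.last m))‖ := by
  have hg' : ∀ y, g y = (M : _ →ₗ[ℝ] _) y + b := hg
  refine ⟨?_, norm_sum_smul_le_of_isMinOn_affine hopt (Fin.last m)⟩
  rw [sum_smul_apply_of_affine hg' hα] at hnew
  rw [sum_smul_residual_of_affine hg' hα, hnew, residual_damped_step_of_affine hg']
  exact norm_damped_add_le hM.le hβ0.le hβ1 _

/-- Damped Anderson acceleration step for an affine contraction: the new residual
is bounded by `((1−β)+κβ)` times the optimized combined residual, which is itself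
no larger than the last residual. -/
theorem stmt_7 (n m : ℕ) (κ : ℝ) (hκ1 : κ < 1)
    (M : EuclideanSpace ℝ (Fin n) →L[ℝ] EuclideanSpace ℝ (Fin n))
    (hM : ‖M‖ = κ)
    (b : EuclideanSpace ℝ (Fin n))
    (g : EuclideanSpace ℝ (Fin n) → EuclideanSpace ℝ (Fin n))
    (hg : ∀ x, g x = M x + b)
    (x : Fin (m + 1) → EuclideanSpace ℝ (Fin n))
    (α : Fin (m + 1) → ℝ) (hα : (∑ i, α i) = 1)
    (hopt : ∀ α' : Fin (m + 1) → ℝ, (∑ i, α' i) = 1 →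
      ‖∑ i, α i • (x i - g (x i))‖ ≤ ‖∑ i, α' i • (x i - g (x i))‖)
    (β : ℝ) (hβ0 : 0 < β) (hβ1 : β ≤ 1)
    (xnew : EuclideanSpace ℝ (Fin n))
    (hnew : xnew = (1 - β) • (∑ i, α i • x i) + β • (∑ i, α i • g (x i))) :
    ‖xnew - g xnew‖ ≤ ((1 - β) + κ * β) * ‖∑ i, α i • (x i - g (x i))‖ ∧
    ‖∑ i, α i • (x i - g (x i))‖ ≤ ‖x (Fin.last m) - g (x (Fin.last m))‖ :=
  stmt_7_general n m κ M hM b g hg x α hα hopt β hβ0 hβ1 xnew hnew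
end

section
/- Suppose a nonnegative sequence r_k satisfies r_{k+1} ≤ ρ r_k + C Σ_{i=0}^m r_{k−m+i}² for all k ≥ m, where ρ ∈ (0,1) and C ≥ 0. Then there exist δ > 0 and ρ̂ ∈ (ρ, 1) such that if max{r_0,...,r_m} ≤ δ then r_k ≤ ρ̂^{k−m} max{r_0,...,r_m} for all k ≥ m; in particular r_k → 0 r-linearly. -/
/-!
Fix `ρ̂ ∈ (ρ, 1)` and let `M = max {r_0, …, r_m}`. By strong induction, `r_k ≤ ρ̂^(k-m) M`
for all `k`: the linear term contributes at most `ρ r_k ≤ ρ ρ̂^(k-m) M`, and every square in the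
window is at most `ρ̂^(k-2m) M · M`, so if `M` is so small that `C (m+1) M ≤ (ρ̂ - ρ) ρ̂^m`, the
quadratic term contributes at most `(ρ̂ - ρ) ρ̂^(k-m) M`; the two add up to `ρ̂^(k+1-m) M`.
-/

open Finset

section QuadraticRecurrence

variable {r : ℕ → ℝ} {ρ q C M : ℝ} {m : ℕ}

lemma sum_window_sq_le_of_le_geom (hr : ∀ k, 0 ≤ r k) (hq0 : 0 ≤ q) (hq1 : q ≤ 1) {K : ℕ}
    (hK : m ≤ K) (hb : ∀ j ≤ K, r j ≤ q ^ (j - m) * M) :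
    ∑ i ∈ range (m + 1), r (K - m + i) ^ 2 ≤ (m + 1) * (q ^ (K - m - m) * M * M) := by
  have hM : 0 ≤ M := by simpa using (hr 0).trans (hb 0 (Nat.zero_le K))
  have hterm : ∀ i ∈ range (m + 1), r (K - m + i) ^ 2 ≤ q ^ (K - m - m) * M * M := by
    intro i hi
    have hj := hb (K - m + i) (by have := mem_range.mp hi; omega)
    have hlate : r (K - m + i) ≤ q ^ (K - m - m) * M :=
      hj.trans (mul_le_mul_of_nonneg_right (pow_le_pow_of_le_one hq0 hq1 (by omega)) hM)
    have hsmall : r (K - m + i) ≤ M :=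
      hj.trans (mul_le_of_le_one_left hM (pow_le_one₀ hq0 hq1))
    rw [sq]
    exact mul_le_mul hlate hsmall (hr _) (by positivity)
  calc ∑ i ∈ range (m + 1), r (K - m + i) ^ 2
      ≤ (range (m + 1)).card • (q ^ (K - m - m) * M * M) := sum_le_card_nsmul _ _ _ hterm
    _ = (m + 1) * (q ^ (K - m - m) * M * M) := by simp

lemma le_geom_of_quadratic_recurrence (hr : ∀ k, 0 ≤ r k) (hρ : 0 ≤ ρ) (hρq : ρ ≤ q)
    (hq1 : q ≤ 1) (hC : 0 ≤ C)
    (hrec : ∀ k ≥ m, r (k + 1) ≤ ρ * r k + C * ∑ i ∈ range (m + 1), r (k - m + i) ^ 2)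
    (hinit : ∀ i ≤ m, r i ≤ M) (hsmall : C * (m + 1) * M ≤ (q - ρ) * q ^ m) :
    ∀ k, r k ≤ q ^ (k - m) * M := by
  have hq0 : 0 ≤ q := hρ.trans hρq
  have hM : 0 ≤ M := (hr 0).trans (hinit 0 (Nat.zero_le m))
  intro k
  induction k using Nat.strong_induction_on with
  | _ k ih =>
    rcases le_or_gt k m with hk | hk
    · simpa [Nat.sub_eq_zero_of_le hk] using hinit k hk
    obtain ⟨K, rfl⟩ : ∃ K, k = K + 1 := ⟨k - 1, by omega⟩
    have hKm : m ≤ K := by omega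
    have hlin : ρ * r K ≤ ρ * (q ^ (K - m) * M) :=
      mul_le_mul_of_nonneg_left (ih K (by omega)) hρ
    have hwindow := sum_window_sq_le_of_le_geom hr hq0 hq1 hKm fun j hj => ih j (by omega)
    have hexp : q ^ m * q ^ (K - m - m) ≤ q ^ (K - m) := by
      rw [← pow_add]
      exact pow_le_pow_of_le_one hq0 hq1 (by omega)
    have hquad : C * ∑ i ∈ range (m + 1), r (K - m + i) ^ 2 ≤ (q - ρ) * (q ^ (K - m) * M) :=
      calc C * ∑ i ∈ range (m + 1), r (K - m + i) ^ 2
          ≤ C * ((m + 1) * (q ^ (K - m - m) * M * M)) := mul_le_mul_of_nonneg_left hwindow hC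
        _ = C * (m + 1) * M * (q ^ (K - m - m) * M) := by ring
        _ ≤ (q - ρ) * q ^ m * (q ^ (K - m - m) * M) := by gcongr
        _ = (q - ρ) * (q ^ m * q ^ (K - m - m) * M) := by ring
        _ ≤ (q - ρ) * (q ^ (K - m) * M) := by
          have : 0 ≤ q - ρ := sub_nonneg.mpr hρq
          gcongr
    rw [show K + 1 - m = K - m + 1 by omega, pow_succ]
    linarith [hrec K hKm]

end QuadraticRecurrence

/-- Local r-linear convergence from the perturbed linear recurrence
`r_{k+1} ≤ ρ r_k + C Σ r_{k−m+i}²`. -/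
theorem stmt_17 (m : ℕ) (ρ C : ℝ) (hρ0 : 0 < ρ) (hρ1 : ρ < 1) (hC : 0 ≤ C) :
    ∃ δ > (0:ℝ), ∃ ρhat : ℝ, ρ < ρhat ∧ ρhat < 1 ∧
      ∀ r : ℕ → ℝ, (∀ k, 0 ≤ r k) →
        (∀ k ≥ m, r (k + 1) ≤ ρ * r k
          + C * ∑ i ∈ Finset.range (m + 1), (r (k - m + i)) ^ 2) →
        (∀ i ≤ m, r i ≤ δ) →
        ∀ k ≥ m, r k ≤ ρhat ^ (k - m)
          * (Finset.range (m + 1)).sup' (Finset.nonempty_range_add_one) r := by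
  obtain ⟨q, hq⟩ : ∃ q : ℝ, q = (1 + ρ) / 2 := ⟨_, rfl⟩
  have hq0 : 0 < q := by rw [hq]; positivity
  have hρq : ρ < q := by linarith
  refine ⟨(q - ρ) * q ^ m / (C * (m + 1) + 1), by positivity, q, hρq, by linarith, ?_⟩
  intro r hr hrec hδ k _
  set M := (range (m + 1)).sup' nonempty_range_add_one r
  have hinit : ∀ i ≤ m, r i ≤ M := fun i hi => le_sup' r (mem_range.mpr (by omega))
  have hMδ : M ≤ (q - ρ) * q ^ m / (C * (m + 1) + 1) :=
    sup'_le _ _ fun i hi => hδ i (by have := mem_range.mp hi; omega)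
  have hsmall : C * (m + 1) * M ≤ (q - ρ) * q ^ m := by
    have hM : 0 ≤ M := (hr 0).trans (hinit 0 (Nat.zero_le m))
    rw [le_div_iff₀ (by positivity)] at hMδ
    nlinarith
  exact le_geom_of_quadratic_recurrence hr hρ0.le hρq.le (by linarith) hC hrec hinit hsmall k
end

section
/- Let r_p ∈ R^n be nonzero, M ∈ R^{n×n} with ‖M‖₂ ≤ κ < 1, and r_q = M r_p. Then the optimized damping factor β* = ⟨r_p − r_q, r_p⟩/‖r_p − r_q‖₂² satisfies β* ≥ (1 − κ)/(1 + κ)² > 0. In particular, for a linear contraction the optimal damping factor is automatically bounded away from zero. -/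
open RealInnerProductSpace

theorem norm_sub_le_one_add_mul {E : Type*} [SeminormedAddCommGroup E] {x y : E} {κ : ℝ}
    (hy : ‖y‖ ≤ κ * ‖x‖) : ‖x - y‖ ≤ (1 + κ) * ‖x‖ :=
  calc ‖x - y‖ ≤ ‖x‖ + ‖y‖ := norm_sub_le x y
    _ ≤ (1 + κ) * ‖x‖ := by linarith

section DampingBound

variable {E : Type*} [NormedAddCommGroup E] [InnerProductSpace ℝ E] {x y : E} {κ : ℝ}

theorem mul_norm_sq_le_inner_sub_self (hy : ‖y‖ ≤ κ * ‖x‖) :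
    (1 - κ) * ‖x‖ ^ 2 ≤ ⟪x - y, x⟫ := by
  have hyx : ⟪y, x⟫ ≤ κ * ‖x‖ ^ 2 :=
    calc ⟪y, x⟫ ≤ ‖y‖ * ‖x‖ := real_inner_le_norm y x
      _ ≤ κ * ‖x‖ * ‖x‖ := by gcongr
      _ = κ * ‖x‖ ^ 2 := by ring
  rw [inner_sub_left, real_inner_self_eq_norm_sq]
  linarith

theorem div_le_inner_sub_self_div_norm_sub_sq (hκ : κ < 1) (hx : x ≠ 0)
    (hy : ‖y‖ ≤ κ * ‖x‖) :
    (1 - κ) / (1 + κ) ^ 2 ≤ ⟪x - y, x⟫ / ‖x - y‖ ^ 2 := by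
  have hx_pos : 0 < ‖x‖ ^ 2 := by positivity
  have hκ_nonneg : 0 ≤ κ := nonneg_of_mul_nonneg_left ((norm_nonneg y).trans hy) (by positivity)
  have h_inner := mul_norm_sq_le_inner_sub_self hy
  have h_inner_pos : 0 < ⟪x - y, x⟫ := lt_of_lt_of_le (by nlinarith) h_inner
  have h_sub_pos : 0 < ‖x - y‖ ^ 2 := by
    have : x - y ≠ 0 := fun h ↦ by simp [h] at h_inner_pos
    positivity
  have h_sub_sq : ‖x - y‖ ^ 2 ≤ (1 + κ) ^ 2 * ‖x‖ ^ 2 := by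
    rw [← mul_pow]; gcongr; exact norm_sub_le_one_add_mul hy
  rw [div_le_div_iff₀ (by positivity) h_sub_pos]
  calc (1 - κ) * ‖x - y‖ ^ 2 ≤ (1 - κ) * ((1 + κ) ^ 2 * ‖x‖ ^ 2) := by
        gcongr
    _ = (1 - κ) * ‖x‖ ^ 2 * (1 + κ) ^ 2 := by ring
    _ ≤ ⟪x - y, x⟫ * (1 + κ) ^ 2 := by gcongr

end DampingBound

/-- For a linear contraction the optimized damping factor is automatically
bounded away from zero: `β* ≥ (1−κ)/(1+κ)² > 0`. -/
theorem stmt_19 (n : ℕ) (κ : ℝ) (hκ1 : κ < 1)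
    (M : EuclideanSpace ℝ (Fin n) →L[ℝ] EuclideanSpace ℝ (Fin n))
    (hM : ‖M‖ ≤ κ)
    (rp : EuclideanSpace ℝ (Fin n)) (hrp : rp ≠ 0)
    (rq : EuclideanSpace ℝ (Fin n)) (hrq : rq = M rp)
    (βstar : ℝ)
    (hβ : βstar = (inner ℝ (rp - rq) rp : ℝ) / ‖rp - rq‖ ^ 2) :
    (1 - κ) / (1 + κ) ^ 2 ≤ βstar ∧ 0 < (1 - κ) / (1 + κ) ^ 2 := by
  have hκ0 : 0 ≤ κ := (norm_nonneg M).trans hM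
  have hrq_le : ‖rq‖ ≤ κ * ‖rp‖ := hrq ▸ M.le_of_opNorm_le hM rp
  exact ⟨hβ ▸ div_le_inner_sub_self_div_norm_sub_sq hκ1 hrp hrq_le,
    div_pos (by linarith) (by positivity)⟩
end
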